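/- Let n ≥ 3 be an odd integer and let G be an n-vertex graph with minimum degree δ(G) ≥ (n−1)/2. If more than (n + 3)/2 vertices of G have degree at least (n + 1)/2, then for every pair of vertices u, v ∈ V(G) there is a Hamilton path in G with endpoints u and v. -/

import Mathlib

/-!
Add a new vertex adjacent exactly to `u` and `v`; a Hamilton cycle of the enlarged graph, read
from the new vertex, is a Hamilton `{u,v}`-path of `G`. With `n = 2m + 1` the enlarged graph has
`2m + 2` vertices, and by Bondy–Chvátal it is Hamiltonian as soon as every supergraph that is closed
under joining non-adjacent pairs of degree sum `≥ 2m + 2` is complete. In such a closed supergraph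
the `≥ m + 3` vertices of degree `≥ m + 1` form a clique, so they have degree `≥ m + 2`; then every
old vertex is joined to all of them, hence has degree `≥ m + 2`; so the old vertices form a clique,
of degree `≥ 2m`, and finally the new vertex, of degree `≥ 2`, is joined to everything.
-/

open Finset

namespace SimpleGraph

variable {V : Type*} {G K : SimpleGraph V}

lemma exists_walk_top_support_eq :
    ∀ (l : List V) (a : V), (a :: l).Nodup →
      ∃ (b : V) (p : (⊤ : SimpleGraph V).Walk a b), p.support = a :: l
  | [], a, _ => ⟨a, .nil, rfl⟩
  | c :: l, a, hl => by
    obtain ⟨b, p, hp⟩ := exists_walk_top_support_eq l c (List.nodup_cons.1 hl).2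
    have hac : a ≠ c := fun h => (List.nodup_cons.1 hl).1 (h ▸ List.mem_cons_self)
    exact ⟨b, .cons ((top_adj a c).2 hac) p, by rw [Walk.support_cons, hp]⟩

lemma Walk.IsPath.start_notMem_support_tail {a b : V} {p : G.Walk a b} (hp : p.IsPath)
    (hnil : ¬p.Nil) : a ∉ p.tail.support :=
  (List.nodup_cons.1 (p.cons_support_tail hnil ▸ hp.support_nodup)).1

lemma Walk.exists_support_eq_of_sup_edge {x y a b : V} (q : (K ⊔ edge x y).Walk a b)
    (hq : s(x, y) ∉ q.edges) : ∃ q' : K.Walk a b, q'.support = q.support := by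
  refine ⟨q.transfer K fun e he => ?_, q.support_transfer _⟩
  rcases (edgeSet_sup K _ ▸ q.edges_subset_edgeSet he :) with h | h
  · exact h
  · exact absurd (edgeSet_edge_subset h ▸ he) hq

lemma card_le_degree_of_forall_adj {x : V} [Fintype (K.neighborSet x)] (T : Finset V)
    (hT : ∀ t ∈ T, K.Adj x t) : #T ≤ K.degree x :=
  card_le_card fun t ht => (mem_neighborFinset K x t).2 (hT t ht)

section Hamiltonian

variable [DecidableEq V]

namespace Walk

variable {a b c d : V}

lemma IsHamiltonian.of_perm {G' : SimpleGraph V} {p : G.Walk a b} {q : G'.Walk c d}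
    (hp : p.IsHamiltonian) (h : p.support.Perm q.support) : q.IsHamiltonian :=
  fun z => h.count_eq z ▸ hp z

lemma IsHamiltonian.reverse {p : G.Walk a b} (hp : p.IsHamiltonian) : p.reverse.IsHamiltonian :=
  hp.of_perm (by rw [support_reverse]; exact (List.reverse_perm _).symm)

variable [Fintype V]

lemma IsHamiltonian.sum_range_getVert {M : Type*} [AddCommMonoid M] {p : G.Walk a b}
    (hp : p.IsHamiltonian) (f : V → M) :
    ∑ i ∈ range (p.length + 1), f (p.getVert i) = ∑ v, f v := by
  rw [← p.length_support, ← Fin.sum_univ_eq_sum_range (fun i => f (p.getVert i))]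
  exact hp.getVertEquiv.sum_comp f

lemma IsHamiltonian.ne {p : G.Walk a b} (hp : p.IsHamiltonian) (h2 : 2 ≤ Fintype.card V) :
    a ≠ b := by
  intro hab
  have := hp.length_eq
  have := length_eq_zero_iff.2 ((hp.isPath.nil_iff_eq).2 hab)
  omega

lemma IsHamiltonian.isHamiltonian_of_adj {p : G.Walk a b} (hp : p.IsHamiltonian)
    (hba : G.Adj b a) (h3 : 3 ≤ Fintype.card V) : G.IsHamiltonian := by
  have htail : (cons hba p).tail.IsHamiltonian := by
    rw [tail_cons]
    exact hp.of_perm (by simp)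
  refine fun _ => ⟨b, .cons hba p, isHamiltonianCycle_isCycle_and_isHamiltonian_tail.2
    ⟨isCycle_iff_isPath_tail_and_le_length.2 ⟨htail.isPath, ?_⟩, htail⟩⟩
  rw [length_cons, hp.length_eq]
  omega

end Walk

variable [Fintype V]

lemma IsHamiltonian.exists_isHamiltonian_walk_adj [Nontrivial V] (hG : G.IsHamiltonian) (x : V) :
    ∃ (w : V) (p : G.Walk x w), p.IsHamiltonian ∧ G.Adj w x := by
  obtain ⟨c, hc⟩ := hG.exists_isHamiltonianCycle x
  exact ⟨c.snd, c.tail.reverse, hc.isHamiltonian_tail.reverse,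
    (c.adj_snd hc.isCycle.not_nil).symm⟩

lemma isHamiltonian_top (h3 : 3 ≤ Fintype.card V) : (⊤ : SimpleGraph V).IsHamiltonian := by
  have hne : (univ : Finset V).toList ≠ [] := by
    simpa [← Finset.nonempty_iff_ne_empty, ← Finset.card_pos] using (by omega : 0 < Fintype.card V)
  obtain ⟨a, l, hl⟩ := List.exists_cons_of_ne_nil hne
  obtain ⟨b, p, hp⟩ := exists_walk_top_support_eq l a (hl ▸ Finset.nodup_toList _)
  have hham : p.IsHamiltonian := fun z =>
    List.count_eq_one_of_mem (hp ▸ hl ▸ Finset.nodup_toList _) (by simp [hp, ← hl])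
  exact hham.isHamiltonian_of_adj ((top_adj b a).2 (hham.ne (by omega)).symm) h3

namespace Walk

variable {x y : V} {p : G.Walk x y}

lemma IsHamiltonian.exists_adj_getVert_succ_adj_getVert [DecidableRel G.Adj]
    (hp : p.IsHamiltonian) (hdeg : Fintype.card V ≤ G.degree x + G.degree y) :
    ∃ i, G.Adj x (p.getVert (i + 1)) ∧ G.Adj y (p.getVert i) := by
  have hdeg_eq (z : V) : G.degree z =
      ∑ i ∈ range (p.length + 1), if G.Adj z (p.getVert i) then 1 else 0 := by
    rw [← card_neighborFinset_eq_degree, neighborFinset_eq_filter, card_filter,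
      hp.sum_range_getVert (fun v => if G.Adj z v then 1 else 0)]
  have hx : G.degree x = ∑ i ∈ range p.length, if G.Adj x (p.getVert (i + 1)) then 1 else 0 := by
    rw [hdeg_eq x, sum_range_succ', getVert_zero, if_neg (G.irrefl), add_zero]
  have hy : G.degree y = ∑ i ∈ range p.length, if G.Adj y (p.getVert i) then 1 else 0 := by
    rw [hdeg_eq y, sum_range_succ, getVert_length, if_neg (G.irrefl), add_zero]
  by_contra! hcross
  have hle : G.degree x + G.degree y ≤ ∑ _i ∈ range p.length, 1 := by
    rw [hx, hy, ← sum_add_distrib]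
    refine sum_le_sum fun i _ => ?_
    by_cases h : G.Adj x (p.getVert (i + 1))
    · simp [h, hcross i h]
    · rw [if_neg h, zero_add]
      split_ifs <;> simp
  have := hp.length_eq
  have : 0 < Fintype.card V := Fintype.card_pos_iff.2 ⟨x⟩
  rw [sum_const, card_range, smul_eq_mul, mul_one] at hle
  omega

lemma IsHamiltonian.isHamiltonian_of_adj_getVert (hp : p.IsHamiltonian) {i : ℕ}
    (hx : G.Adj x (p.getVert (i + 1))) (hy : G.Adj y (p.getVert i)) (h3 : 3 ≤ Fintype.card V) :
    G.IsHamiltonian := by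
  have hi : i < p.length := by
    by_contra! hi
    exact G.irrefl (p.getVert_of_length_le hi ▸ hy)
  refine IsHamiltonian.isHamiltonian_of_adj
    (p := (p.drop (i + 1)).append (.cons hy (p.take i).reverse)) (hp.of_perm ?_) hx h3
  simp [support_append, support_take, min_eq_left (Nat.succ_le_of_lt hi)]
  conv_lhs => rw [← List.take_append_drop (i + 1) p.support]
  exact List.perm_append_comm.trans (List.Perm.append_left _ (List.reverse_perm _).symm)

end Walk

variable {x y : V}

lemma IsHamiltonian.isHamiltonian_or_exists_of_sup_edge (h3 : 3 ≤ Fintype.card V)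
    (hK : (K ⊔ edge x y).IsHamiltonian) :
    K.IsHamiltonian ∨ ∃ p : K.Walk x y, p.IsHamiltonian := by
  have : Nontrivial V := Fintype.one_lt_card_iff_nontrivial.1 (by omega)
  -- Read the cycle from `x`: the edge `xy`, if it is used, is its first or its last edge.
  obtain ⟨w, p, hp, hwx⟩ := hK.exists_isHamiltonian_walk_adj x
  by_cases hwy : w = y
  · subst hwy
    have hxw : s(x, w) ∉ p.edges := fun h => by
      have := hp.isPath.length_eq_one_of_mem_edges h
      have := hp.length_eq
      omega
    obtain ⟨q, hq⟩ := p.exists_support_eq_of_sup_edge hxw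
    exact .inr ⟨q, hp.of_perm (by rw [hq])⟩
  have hwx' : K.Adj w x := by
    rcases hwx with h | h
    · exact h
    · grind
  by_cases hxy : s(x, y) ∈ p.edges
  · have hsnd : y = p.snd := hp.isPath.eq_snd_of_mem_edges hxy
    have hnil : ¬p.Nil := p.not_nil_of_ne (hp.ne (by omega))
    obtain ⟨q, hq⟩ := p.tail.exists_support_eq_of_sup_edge
      fun h => hp.isPath.start_notMem_support_tail hnil (p.tail.fst_mem_support_of_mem_edges h)
    refine .inr ⟨((q.concat hwx').reverse).copy rfl hsnd.symm, hp.of_perm ?_⟩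
    rw [Walk.support_copy, Walk.support_reverse, Walk.support_concat, hq,
      ← p.cons_support_tail hnil]
    exact (List.perm_append_singleton _ _).symm.trans (List.reverse_perm _).symm
  · obtain ⟨q, hq⟩ := p.exists_support_eq_of_sup_edge hxy
    exact .inl ((hp.of_perm (by rw [hq])).isHamiltonian_of_adj hwx' h3)

theorem IsHamiltonian.of_sup_edge [DecidableRel K.Adj] (h3 : 3 ≤ Fintype.card V)
    (hdeg : Fintype.card V ≤ K.degree x + K.degree y) (hK : (K ⊔ edge x y).IsHamiltonian) :
    K.IsHamiltonian := by
  obtain hK | ⟨p, hp⟩ := hK.isHamiltonian_or_exists_of_sup_edge h3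
  · exact hK
  · obtain ⟨i, hx, hy⟩ := hp.exists_adj_getVert_succ_adj_getVert hdeg
    exact hp.isHamiltonian_of_adj_getVert hx hy h3

end Hamiltonian

section Closure

variable [Fintype V]

open Classical in
/-- `K` is its own Bondy–Chvátal `k`-closure. -/
def IsDegreeSumClosed (K : SimpleGraph V) (k : ℕ) : Prop :=
  ∀ ⦃x y : V⦄, x ≠ y → k ≤ K.degree x + K.degree y → K.Adj x y

theorem isHamiltonian_of_forall_isDegreeSumClosed_eq_top [DecidableEq V] {H : SimpleGraph V}
    (h3 : 3 ≤ Fintype.card V) (hH : ∀ K, H ≤ K → K.IsDegreeSumClosed (Fintype.card V) → K = ⊤) :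
    H.IsHamiltonian := by
  classical
  suffices ∀ K, H ≤ K → K.IsHamiltonian from this H le_rfl
  intro K
  induction K using WellFoundedGT.induction with
  | _ K ih =>
    intro hHK
    by_cases hK : K.IsDegreeSumClosed (Fintype.card V)
    · rw [hH K hHK hK]
      exact isHamiltonian_top h3
    obtain ⟨x, y, hxy, hdeg, hna⟩ : ∃ x y, x ≠ y ∧ Fintype.card V ≤ K.degree x + K.degree y ∧
        ¬K.Adj x y := by
      simpa [IsDegreeSumClosed] using hK
    have hlt : K < K ⊔ edge x y :=
      left_lt_sup.2 fun h => hna (h ((edge_adj x y x y).2 ⟨.inl ⟨rfl, rfl⟩, hxy⟩))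
    exact (ih _ hlt (hHK.trans hlt.le)).of_sup_edge h3 hdeg

end Closure

section Apex

def addApex (G : SimpleGraph V) (s : Set V) : SimpleGraph (Option V) where
  Adj
    | some a, some b => G.Adj a b
    | none, some b => b ∈ s
    | some a, none => a ∈ s
    | none, none => False
  symm := ⟨by
    rintro (_ | a) (_ | b) h
    exacts [h, h, h, h.symm]⟩
  loopless := ⟨by
    rintro (_ | a) h
    exacts [h, G.irrefl h]⟩

variable {s : Set V}

@[simp] lemma addApex_adj_some_some {a b : V} : (G.addApex s).Adj (some a) (some b) ↔ G.Adj a b :=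
  Iff.rfl

@[simp] lemma addApex_adj_none_some {b : V} : (G.addApex s).Adj none (some b) ↔ b ∈ s :=
  Iff.rfl

lemma le_degree_some_of_addApex_le {H : SimpleGraph (Option V)} (hH : G.addApex s ≤ H) (z : V)
    [Fintype (G.neighborSet z)] [Fintype (H.neighborSet (some z))] :
    G.degree z ≤ H.degree (some z) :=
  Copy.degree_le ⟨⟨some, fun h => hH h⟩, Option.some_injective V⟩ z

lemma Walk.exists_map_some_support_eq {a' b' : Option V} (q : (G.addApex s).Walk a' b')
    (hq : none ∉ q.support) (a b : V) (ha : a' = some a) (hb : b' = some b) :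
    ∃ q' : G.Walk a b, q'.support.map some = q.support := by
  induction q generalizing a with
  | nil =>
    obtain rfl : a = b := Option.some_injective V (ha.symm.trans hb)
    exact ⟨.nil, by simp [ha]⟩
  | @cons _ c _ h q ih =>
    subst ha
    obtain _ | c := c
    · exact absurd (List.mem_cons_of_mem _ q.start_mem_support) hq
    obtain ⟨q', hq'⟩ := ih (fun h => hq (List.mem_cons_of_mem _ h)) c rfl hb
    exact ⟨.cons (addApex_adj_some_some.1 h) q', by
      rw [support_cons, support_cons, List.map_cons, hq']⟩

variable [DecidableEq V] [Fintype V]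

theorem IsHamiltonian.exists_isHamiltonian_walk_of_addApex {u v : V} (huv : u ≠ v)
    (hH : (G.addApex {u, v}).IsHamiltonian) : ∃ p : G.Walk u v, p.IsHamiltonian := by
  have : Nontrivial V := ⟨⟨u, v, huv⟩⟩
  have h2 : 2 ≤ Fintype.card V := Fintype.one_lt_card
  obtain ⟨w, p, hp, hw⟩ := hH.exists_isHamiltonian_walk_adj none
  obtain _ | b := w
  · exact absurd hw (G.addApex _).irrefl
  have hnil : ¬p.Nil := p.not_nil_of_ne (by simp)
  obtain ⟨a, hsnd⟩ : ∃ a, p.snd = some a := Option.ne_none_iff_exists'.1 (p.adj_snd hnil).ne'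
  have ha : a ∈ ({u, v} : Set V) := by simpa [hsnd] using p.adj_snd hnil
  obtain ⟨q, hq⟩ := p.tail.exists_map_some_support_eq
    (hp.isPath.start_notMem_support_tail hnil) a b hsnd rfl
  have hsupp := p.cons_support_tail hnil
  have hqham : q.IsHamiltonian := by
    refine ((Walk.isPath_def q).2 (List.Nodup.of_map some ?_)).isHamiltonian_of_mem fun z => ?_
    · rw [hq]
      exact hp.isPath.tail.support_nodup
    · have := hp.mem_support (some z)
      rw [← hsupp, List.mem_cons, ← hq] at this
      simpa using this
  have hab := hqham.ne h2
  simp only [Set.mem_insert_iff, Set.mem_singleton_iff] at ha hw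
  rcases ha with rfl | rfl <;> rcases hw with rfl | rfl
  exacts [absurd rfl hab, ⟨q, hqham⟩, ⟨q.reverse, hqham.reverse⟩, absurd rfl hab]

end Apex

open Classical in
theorem eq_top_of_isDegreeSumClosed_of_le_degree [Fintype V] {m : ℕ} (hV : Fintype.card V = 2 * m + 1)
    {K : SimpleGraph (Option V)} (hK : K.IsDegreeSumClosed (2 * m + 2)) (S : Finset V)
    (hS : m + 3 ≤ #S) (hdeg : ∀ z, m ≤ K.degree (some z))
    (hSdeg : ∀ z ∈ S, m + 1 ≤ K.degree (some z)) (hnone : 2 ≤ K.degree none) : K = ⊤ := by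
  have hdeg_of_adj (a : V) (h : ∀ b ∈ S, a ≠ b → K.Adj (some a) (some b)) :
      m + 2 ≤ K.degree (some a) := by
    refine le_trans ?_ (card_le_degree_of_forall_adj ((S.erase a).map .some) ?_)
    · rw [card_map]
      have := pred_card_le_card_erase (s := S) (a := a)
      omega
    · simp only [mem_map, mem_erase]
      rintro _ ⟨b, ⟨hba, hb⟩, rfl⟩
      exact h b hb (Ne.symm hba)
  have hSS (a : V) (ha : a ∈ S) (b : V) (hb : b ∈ S) (hab : a ≠ b) : K.Adj (some a) (some b) :=
    hK (by simpa) (by linarith [hSdeg a ha, hSdeg b hb])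
  have hVS (a : V) (b : V) (hb : b ∈ S) (hab : a ≠ b) : K.Adj (some a) (some b) :=
    hK (by simpa) (by linarith [hdeg a, hdeg_of_adj b fun c hc hbc => hSS b hb c hc hbc])
  have hVV (a b : V) (hab : a ≠ b) : K.Adj (some a) (some b) :=
    hK (by simpa) (by linarith [hdeg_of_adj a (hVS a), hdeg_of_adj b (hVS b)])
  have hnoneV (a : V) : K.Adj none (some a) := by
    refine hK (by simp) (le_trans ?_ (add_le_add hnone
      (card_le_degree_of_forall_adj ((univ.erase a).map .some) ?_)))
    · rw [card_map, card_erase_of_mem (mem_univ a), card_univ, hV]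
      omega
    · simp only [mem_map, mem_erase]
      rintro _ ⟨b, ⟨hba, -⟩, rfl⟩
      exact hVV a b (Ne.symm hba)
  refine eq_top_iff.2 fun x y hxy => ?_
  obtain _ | a := x <;> obtain _ | b := y
  · exact absurd rfl hxy
  · exact hnoneV b
  · exact (hnoneV a).symm
  · exact hVV a b (by simpa using hxy)

end SimpleGraph

open SimpleGraph

theorem hamilton_path_many_large_degrees_odd_general (n : ℕ) (hno : Odd n)
    (G : SimpleGraph (Fin n)) [DecidableRel G.Adj]
    (hδ : (n - 1) / 2 ≤ G.minDegree)
    (hbig : (n + 3) / 2 < (Finset.univ.filter (fun v => (n + 1) / 2 ≤ G.degree v)).card)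
    (u v : Fin n) (huv : u ≠ v) :
    ∃ p : G.Walk u v, p.IsHamiltonian := by
  obtain ⟨m, rfl⟩ := hno
  set S := univ.filter fun z => (2 * m + 1 + 1) / 2 ≤ G.degree z
  have hS : m + 3 ≤ #S := by omega
  have hm : m + 3 ≤ 2 * m + 1 := hS.trans (by simpa using card_le_univ S)
  have h3 : 3 ≤ Fintype.card (Option (Fin (2 * m + 1))) := by
    simp only [Fintype.card_option, Fintype.card_fin]
    omega
  refine (isHamiltonian_of_forall_isDegreeSumClosed_eq_top h3 fun K hHK hK => ?_
    ).exists_isHamiltonian_walk_of_addApex huv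
  classical
  refine eq_top_of_isDegreeSumClosed_of_le_degree (Fintype.card_fin _) (by simpa using hK) S hS
    (fun z => ?_) (fun z hz => ?_) ?_
  · have := G.minDegree_le_degree z
    exact le_trans (by omega : m ≤ G.degree z) (le_degree_some_of_addApex_le hHK z)
  · have := (mem_filter.1 hz).2
    exact le_trans (by omega : m + 1 ≤ G.degree z) (le_degree_some_of_addApex_le hHK z)
  · refine le_trans (card_pair ((Option.some_injective _).ne huv)).ge
      (card_le_degree_of_forall_adj _ fun t ht => hHK ?_)
    simp only [mem_insert, mem_singleton] at ht
    rcases ht with rfl | rfl <;> simp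

/-- **Lemma (part 3).** Let `n ≥ 3` be odd and `G` an `n`-vertex graph with
`δ(G) ≥ (n-1)/2`. If more than `(n + 3)/2` vertices have degree at least
`(n + 1)/2`, then for every pair of vertices `u, v` there is a Hamilton
`{u,v}`-path. -/
theorem hamilton_path_many_large_degrees_odd (n : ℕ) (hn : 3 ≤ n) (hno : Odd n)
    (G : SimpleGraph (Fin n)) [DecidableRel G.Adj]
    (hδ : (n - 1) / 2 ≤ G.minDegree)
    (hbig : (n + 3) / 2 < (Finset.univ.filter (fun v => (n + 1) / 2 ≤ G.degree v)).card)
    (u v : Fin n) (huv : u ≠ v) :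
    ∃ p : G.Walk u v, p.IsHamiltonian :=
  hamilton_path_many_large_degrees_odd_general n hno G hδ hbig u v huv
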